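/- For polynomials a, b, c ∈ Q[T] with a = bc and b, c nonzero nonconstant, the element √(a² + c) of Q((1/T)) has the periodic continued fraction expansion [a; 2b, 2a, 2b, 2a, ...] (period 2b, 2a). In particular √(a² + 1) = [a; 2a, 2a, ...]. -/

import Mathlib

noncomputable section
open scoped Classical

/-- `ℚ((1/T))`: formal Laurent series in `X = 1/T` over `ℚ`. The exponent `n` of `X`
corresponds to `T^(-n)`. -/
abbrev QLaurent := LaurentSeries ℚ

/-- The embedding of `ℚ[T]` into `ℚ((1/T))`, sending `T` to `X⁻¹ = single (-1) 1`. -/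
noncomputable def polyToL : Polynomial ℚ →ₐ[ℚ] QLaurent :=
  Polynomial.aeval (HahnSeries.single (-1 : ℤ) (1 : ℚ))

/-- The embedding of the rational functions `ℚ(T)` into `ℚ((1/T))`. -/
noncomputable def ratToL (r : RatFunc ℚ) : QLaurent := polyToL r.num / polyToL r.denom

/-- The degree (in `T`) of a formal Laurent series in `1/T`, with `deg 0 = ⊥`. -/
noncomputable def degL (α : QLaurent) : WithBot ℤ :=
  if α = 0 then ⊥ else ((-α.order : ℤ) : WithBot ℤ)

/-- Integer-valued degree in `T` (junk value `0` at `α = 0`). -/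
noncomputable def degZ (α : QLaurent) : ℤ := -α.order

/-- The polynomial part `⌊α⌋` of `α ∈ ℚ((1/T))`: truncation to the terms of
nonnegative degree in `T` (nonpositive exponent of `X = 1/T`). -/
noncomputable def polyPart (α : QLaurent) : QLaurent where
  coeff n := if n ≤ 0 then α.coeff n else 0
  isPWO_support' := α.isPWO_support'.mono (by
    intro n hn
    simp only [Function.mem_support, ne_eq] at hn ⊢
    intro h
    apply hn
    split_ifs <;> simp [h])

/-- The fractional part `{α} = α - ⌊α⌋`. -/
noncomputable def fracPart (α : QLaurent) : QLaurent := α - polyPart α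

/-- The complete quotients `α_n` of the continued fraction algorithm:
`α_0 = α`, `α_{n+1} = 1/{α_n}`. -/
noncomputable def cfA (α : QLaurent) : ℕ → QLaurent
  | 0 => α
  | n + 1 => (fracPart (cfA α n))⁻¹

/-- The partial quotients `a_n = ⌊α_n⌋` of the continued fraction of `α`. -/
noncomputable def pq (α : QLaurent) (n : ℕ) : QLaurent := polyPart (cfA α n)

/-! Put `β = α - a`. From `α² = a² + c` we get `β = c / (α + a)`, and `α + a` has the leading term
`2 lc(a) T^(deg a)`, so `deg β = deg c - deg a = -deg b < 0`. Moreover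
`1/β = (α + a)/c = 2b + β/c` with `deg (β/c) = -deg a < 0`, and `c/β = α + a = 2a + β`.
Hence the complete quotients alternate between `2b + β/c` and `2a + β`. -/

open scoped Polynomial

section SquareRoot

variable {K : Type*} [Field K] {α A B C : K}

lemma sub_eq_div_add_of_sq_eq (h : α ^ 2 = A ^ 2 + C) (hne : α + A ≠ 0) :
    α - A = C / (α + A) := by
  rw [eq_div_iff hne]
  linear_combination h

lemma sub_ne_zero_of_sq_eq (h : α ^ 2 = A ^ 2 + C) (hC : C ≠ 0) : α - A ≠ 0 := by
  rintro hα
  apply hC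
  linear_combination (α + A) * hα - h

lemma inv_sub_eq_of_sq_eq (h : α ^ 2 = A ^ 2 + C) (hC : C ≠ 0) (hA : A = B * C) :
    (α - A)⁻¹ = 2 * B + (α - A) / C := by
  have hne := sub_ne_zero_of_sq_eq h hC
  field_simp
  linear_combination -h + 2 * (α - A) * hA

lemma inv_sub_div_eq_of_sq_eq (h : α ^ 2 = A ^ 2 + C) (hC : C ≠ 0) :
    ((α - A) / C)⁻¹ = 2 * A + (α - A) := by
  have hne := sub_ne_zero_of_sq_eq h hC
  field_simp
  linear_combination -h

end SquareRoot

lemma LaurentSeries.order_div {K : Type*} [Field K] {x y : LaurentSeries K} (hx : x ≠ 0)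
    (hy : y ≠ 0) : (x / y).order = x.order - y.order := by
  have h := HahnSeries.order_mul (div_ne_zero hx hy) hy
  rw [div_mul_cancel₀ x hy] at h
  omega

lemma polyToL_monomial (k : ℕ) (r : ℚ) :
    polyToL (Polynomial.monomial k r) = HahnSeries.single (-(k : ℤ)) r := by
  rw [← Polynomial.C_mul_X_pow_eq_monomial, map_mul, map_pow, polyToL, Polynomial.aeval_X,
    Polynomial.aeval_C, HahnSeries.single_pow, LaurentSeries.algebraMap_apply, HahnSeries.C_apply,
    HahnSeries.single_mul_single]
  simp

lemma polyToL_coeff (p : ℚ[X]) (n : ℤ) :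
    (polyToL p).coeff n = if n ≤ 0 then p.coeff (-n).toNat else 0 := by
  induction p using Polynomial.induction_on' with
  | add p q hp hq =>
    simp only [map_add, HahnSeries.coeff_add, hp, hq, Polynomial.coeff_add]
    split_ifs <;> simp
  | monomial k r =>
    rw [polyToL_monomial, HahnSeries.coeff_single, Polynomial.coeff_monomial]
    split_ifs <;> first | rfl | omega

lemma polyToL_coeff_neg_natCast (p : ℚ[X]) (k : ℕ) :
    (polyToL p).coeff (-(k : ℤ)) = p.coeff k := by
  simp [polyToL_coeff]

lemma polyToL_coeff_of_pos (p : ℚ[X]) {n : ℤ} (hn : 0 < n) : (polyToL p).coeff n = 0 := by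
  rw [polyToL_coeff, if_neg (by omega)]

lemma polyToL_injective : Function.Injective polyToL := by
  intro p q h
  ext k
  rw [← polyToL_coeff_neg_natCast, ← polyToL_coeff_neg_natCast, h]

lemma polyToL_ne_zero {p : ℚ[X]} (hp : p ≠ 0) : polyToL p ≠ 0 :=
  (map_ne_zero_iff _ polyToL_injective).mpr hp

lemma order_polyToL {p : ℚ[X]} (hp : p ≠ 0) : (polyToL p).order = -(p.natDegree : ℤ) := by
  refine le_antisymm (HahnSeries.order_le_of_coeff_ne_zero ?_)
    ((HahnSeries.le_order_iff_forall (polyToL_ne_zero hp)).mpr fun n hn => ?_)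
  · rwa [polyToL_coeff_neg_natCast, ← Polynomial.leadingCoeff, Polynomial.leadingCoeff_ne_zero]
  · rw [polyToL_coeff, if_pos (by omega)]
    exact Polynomial.coeff_eq_zero_of_natDegree_lt (by omega)

lemma order_add_polyToL_of_sq_eq {a c : ℚ[X]} {α : QLaurent}
    (hca : c.natDegree < 2 * a.natDegree) (hsq : α ^ 2 = polyToL (a ^ 2 + c))
    (hlead : α.coeff (-(a.natDegree : ℤ)) = a.leadingCoeff) :
    (α + polyToL a).order = -(a.natDegree : ℤ) := by
  have ha : a ≠ 0 := Polynomial.ne_zero_of_natDegree_gt (n := 0) (by omega)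
  have hdeg : (a ^ 2 + c).natDegree = 2 * a.natDegree := by
    rw [Polynomial.natDegree_add_eq_left_of_natDegree_lt, Polynomial.natDegree_pow]
    rwa [Polynomial.natDegree_pow]
  have hsum : a ^ 2 + c ≠ 0 := Polynomial.ne_zero_of_natDegree_gt (n := 0) (by omega)
  have hαord : α.order = -(a.natDegree : ℤ) := by
    have h := congrArg HahnSeries.order hsq
    rw [HahnSeries.order_pow, two_nsmul, order_polyToL hsum, hdeg] at h
    omega
  have hcoeff : (α + polyToL a).coeff (-(a.natDegree : ℤ)) ≠ 0 := by
    rw [HahnSeries.coeff_add, hlead, polyToL_coeff_neg_natCast, ← Polynomial.leadingCoeff]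
    simpa [← two_mul] using ha
  refine le_antisymm (HahnSeries.order_le_of_coeff_ne_zero hcoeff) ?_
  calc -(a.natDegree : ℤ) = min α.order (polyToL a).order := by
        rw [hαord, order_polyToL ha, min_self]
    _ ≤ (α + polyToL a).order :=
        HahnSeries.min_order_le_order_add (HahnSeries.ne_zero_of_coeff_ne_zero hcoeff)

lemma polyPart_polyToL_add (p : ℚ[X]) {β : QLaurent} (hβ : 0 < β.order) :
    polyPart (polyToL p + β) = polyToL p := by
  ext n
  change (if n ≤ 0 then _ else 0) = _
  split_ifs with h
  · rw [HahnSeries.coeff_add, HahnSeries.coeff_eq_zero_of_lt_order (h.trans_lt hβ), add_zero]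
  · exact (polyToL_coeff_of_pos p (by omega)).symm

lemma fracPart_polyToL_add (p : ℚ[X]) {β : QLaurent} (hβ : 0 < β.order) :
    fracPart (polyToL p + β) = β := by
  rw [fracPart, polyPart_polyToL_add p hβ, add_sub_cancel_left]

section ContinuedFraction

variable {α β γ : QLaurent} {p q : ℚ[X]} {k : ℕ}

lemma pq_eq_of_cfA_eq (hk : cfA α k = polyToL p + β) (hβ : 0 < β.order) :
    pq α k = polyToL p := by
  rw [pq, hk, polyPart_polyToL_add p hβ]

lemma cfA_succ_eq_of_cfA_eq (hk : cfA α k = polyToL p + β) (hβ : 0 < β.order) :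
    cfA α (k + 1) = β⁻¹ := by
  rw [cfA, hk, fracPart_polyToL_add p hβ]

lemma cfA_add_two_eq (hβ : 0 < β.order) (hγ : 0 < γ.order) (hβγ : β⁻¹ = polyToL q + γ)
    (hγβ : γ⁻¹ = polyToL p + β) (hk : cfA α k = polyToL p + β) :
    cfA α (k + 2) = polyToL p + β := by
  have hk₁ : cfA α (k + 1) = polyToL q + γ := by rw [cfA_succ_eq_of_cfA_eq hk hβ, hβγ]
  rw [cfA_succ_eq_of_cfA_eq hk₁ hγ, hγβ]

lemma pq_periodic_two (hβ : 0 < β.order) (hγ : 0 < γ.order) (hβγ : β⁻¹ = polyToL q + γ)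
    (hγβ : γ⁻¹ = polyToL p + β) (hk : cfA α k = polyToL p + β) (n : ℕ) :
    pq α (k + 2 * n) = polyToL p ∧ pq α (k + 2 * n + 1) = polyToL q := by
  have hn : cfA α (k + 2 * n) = polyToL p + β := by
    induction n with
    | zero => exact hk
    | succ n ih => exact cfA_add_two_eq hβ hγ hβγ hγβ ih
  have hn₁ : cfA α (k + 2 * n + 1) = polyToL q + γ := by
    rw [cfA_succ_eq_of_cfA_eq hn hβ, hβγ]
  exact ⟨pq_eq_of_cfA_eq hn hβ, pq_eq_of_cfA_eq hn₁ hγ⟩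

end ContinuedFraction

theorem sqrt_cf_periodic_general (a b c : Polynomial ℚ) (hc : c ≠ 0)
    (hbd : 1 ≤ b.natDegree) (habc : a = b * c)
    (α : QLaurent) (hsq : α ^ 2 = polyToL (a ^ 2 + c))
    (hlead : α.coeff (-(a.natDegree : ℤ)) = a.leadingCoeff) :
    pq α 0 = polyToL a ∧
    ∀ n : ℕ, pq α (2 * n + 1) = polyToL (2 * b) ∧ pq α (2 * n + 2) = polyToL (2 * a) := by
  have hdeg : a.natDegree = b.natDegree + c.natDegree :=
    habc ▸ Polynomial.natDegree_mul (Polynomial.ne_zero_of_natDegree_gt hbd) hc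
  have hsq' : α ^ 2 = polyToL a ^ 2 + polyToL c := by rw [hsq, map_add, map_pow]
  have hC : polyToL c ≠ 0 := polyToL_ne_zero hc
  have hadd := order_add_polyToL_of_sq_eq (by omega) hsq hlead
  have hadd₀ : α + polyToL a ≠ 0 := fun h => by simp only [h, HahnSeries.order_zero] at hadd; omega
  have hβ : (α - polyToL a).order = b.natDegree := by
    rw [sub_eq_div_add_of_sq_eq hsq' hadd₀, LaurentSeries.order_div hC hadd₀, order_polyToL hc,
      hadd]
    omega
  have hγ₀ : 0 < ((α - polyToL a) / polyToL c).order := by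
    rw [LaurentSeries.order_div (sub_ne_zero_of_sq_eq hsq' hC) hC, hβ, order_polyToL hc]
    omega
  have hβγ : (α - polyToL a)⁻¹ = polyToL (2 * b) + (α - polyToL a) / polyToL c := by
    rw [inv_sub_eq_of_sq_eq hsq' hC (by rw [habc, map_mul]), map_mul, map_ofNat]
  have hγβ : ((α - polyToL a) / polyToL c)⁻¹ = polyToL (2 * a) + (α - polyToL a) := by
    rw [inv_sub_div_eq_of_sq_eq hsq' hC, map_mul, map_ofNat]
  have hβ₀ : 0 < (α - polyToL a).order := by omega
  have h₀ : cfA α 0 = polyToL a + (α - polyToL a) := (add_sub_cancel _ _).symm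
  have h₁ : cfA α 1 = polyToL (2 * b) + (α - polyToL a) / polyToL c := by
    rw [cfA_succ_eq_of_cfA_eq h₀ hβ₀, hβγ]
  refine ⟨pq_eq_of_cfA_eq h₀ hβ₀, fun n => ?_⟩
  rw [show 2 * n + 2 = 1 + 2 * n + 1 by omega, add_comm (2 * n)]
  exact pq_periodic_two hγ₀ hβ₀ hγβ hβγ h₁ n

/-- For `a, b, c ∈ ℚ[T]` with `a = b c` and `b, c` nonzero and nonconstant, the
square root `α` of `a² + c` in `ℚ((1/T))` (the one whose leading term agrees with
that of `a`) has the periodic continued fraction expansion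
`[a; 2b, 2a, 2b, 2a, …]`. -/
theorem sqrt_cf_periodic (a b c : Polynomial ℚ) (hb : b ≠ 0) (hc : c ≠ 0)
    (hbd : 1 ≤ b.natDegree) (hcd : 1 ≤ c.natDegree) (habc : a = b * c)
    (α : QLaurent) (hsq : α ^ 2 = polyToL (a ^ 2 + c))
    (hlead : α.coeff (-(a.natDegree : ℤ)) = a.leadingCoeff) :
    pq α 0 = polyToL a ∧
    ∀ n : ℕ, pq α (2 * n + 1) = polyToL (2 * b) ∧ pq α (2 * n + 2) = polyToL (2 * a) :=
  sqrt_cf_periodic_general a b c hc hbd habc α hsq hlead
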